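/- arXiv:1611.02002 — 7 statements merged into one kernel-verified Lean document; each statement's English description precedes it below -/
import Mathlib

section
/- Let P be a finite partial order and let A, B, C be maximal antichains of P with A ⊑ B ⊑ C. Then A ∩ C ⊆ B (consecutiveness property). -/
/-- A maximal antichain of a partial order: an antichain (w.r.t. `≤`) not properly
contained in any other antichain. -/
def MaxAntichain {α : Type*} [PartialOrder α] (A : Set α) : Prop :=
  IsAntichain (· ≤ ·) A ∧ ∀ B : Set α, IsAntichain (· ≤ ·) B → A ⊆ B → A = B

/-- The order `A ⊑ B` on maximal antichains: every element of `A` is below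
some element of `B`. -/
def MARel {α : Type*} [PartialOrder α] (A B : Set α) : Prop :=
  ∀ a ∈ A, ∃ b ∈ B, a ≤ b

theorem stmt3 {α : Type*} [Fintype α] [PartialOrder α] (A B C : Set α)
    (hA : MaxAntichain A) (hB : MaxAntichain B) (hC : MaxAntichain C)
    (hAB : MARel A B) (hBC : MARel B C) :
    A ∩ C ⊆ B := by
  rintro x ⟨hxA, hxC⟩
  obtain ⟨b, hbB, hxb⟩ := hAB x hxA
  obtain ⟨c, hcC, hbc⟩ := hBC b hbB
  have hxc : x ≤ c := le_trans hxb hbc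
  have hxceq : x = c := by
    by_contra hne
    exact hC.1 hxC hcC hne hxc
  have : b = x := le_antisymm (hxceq ▸ hbc) hxb
  exact this ▸ hbB
end

section
/- Let P be a finite partial order and let A, B be two distinct maximal antichains of P. Then B covers A in (MA(P), ⊑) if and only if for every x ∈ A \ B and every y ∈ B \ A, y covers x in P (i.e., x ⋖_P y). -/
/-- `B` covers `A` in `(MA(P), ⊑)`: `A ⊑ B`, `A ≠ B`, and no maximal antichain
distinct from both lies between them. -/
def MACovers {α : Type*} [PartialOrder α] (A B : Set α) : Prop :=
  MARel A B ∧ A ≠ B ∧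
    ¬ ∃ C : Set α, MaxAntichain C ∧ C ≠ A ∧ C ≠ B ∧ MARel A C ∧ MARel C B

/-!
Going up from `A` to `B` means replacing `A \ B` by `B \ A`. If some `x ∈ A \ B` is not below
some `y ∈ B \ A`, or some `z` lies strictly between them, then an antichain through `y`
(resp. `z`) and the part of `A` not below it extends, inside the down-set of `B`, to a maximal
antichain strictly between `A` and `B`. Conversely, if every such `x` is covered by every such `y`,
a maximal antichain between `A` and `B` lies in `A ∪ B`, and it cannot meet both `A \ B` and
`B \ A`, so it is `A` or `B`.
-/

open Set

section

variable {α : Type*} [PartialOrder α]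

lemma marel_iff_subset_lowerClosure {A B : Set α} : MARel A B ↔ A ⊆ lowerClosure B := by
  simp only [MARel, subset_def, SetLike.mem_coe, mem_lowerClosure]

lemma exists_le_or_le_of_maximal {D M : Set α}
    (hM : Maximal (fun T => IsAntichain (· ≤ ·) T ∧ T ⊆ D) M) {z : α} (hz : z ∈ D) :
    ∃ m ∈ M, m ≤ z ∨ z ≤ m := by
  by_contra! h
  have hzM : z ∉ M := fun hzM => (h z hzM).1 le_rfl
  have hins : IsAntichain (· ≤ ·) (insert z M) :=
    hM.prop.1.insert (fun m hm _ => (h m hm).1) (fun m hm _ => (h m hm).2)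
  exact hzM <| (hM.eq_of_subset ⟨hins, insert_subset hz hM.prop.2⟩ (subset_insert z M)).symm ▸
    mem_insert z M

lemma maxAntichain_iff {A : Set α} :
    MaxAntichain A ↔ IsAntichain (· ≤ ·) A ∧ ∀ x, ∃ a ∈ A, a ≤ x ∨ x ≤ a := by
  refine ⟨fun hA => ⟨hA.1, fun x => ?_⟩, fun ⟨hA, hcomp⟩ => ⟨hA, fun B hB hAB => ?_⟩⟩
  · refine exists_le_or_le_of_maximal (D := univ) ⟨⟨hA.1, subset_univ A⟩, ?_⟩ (mem_univ x)
    exact fun T hT hAT => (hA.2 T hT.1 hAT).ge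
  · refine hAB.antisymm fun b hb => ?_
    obtain ⟨a, ha, hab | hba⟩ := hcomp b
    · exact hB.eq (hAB ha) hb hab ▸ ha
    · exact (hB.eq hb (hAB ha) hba).symm ▸ ha

lemma MaxAntichain.exists_le_or_le {A : Set α} (hA : MaxAntichain A) (x : α) :
    ∃ a ∈ A, a ≤ x ∨ x ≤ a :=
  (maxAntichain_iff.1 hA).2 x

lemma IsAntichain.exists_maximal_subset {S D : Set α} (hS : IsAntichain (· ≤ ·) S)
    (hSD : S ⊆ D) :
    ∃ M, S ⊆ M ∧ Maximal (fun T => IsAntichain (· ≤ ·) T ∧ T ⊆ D) M := by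
  refine zorn_subset_nonempty _ (fun c hc hchain _ => ?_) S ⟨hS, hSD⟩
  refine ⟨⋃₀ c, ⟨?_, sUnion_subset fun T hT => (hc hT).2⟩, fun T hT => subset_sUnion_of_mem hT⟩
  exact (pairwise_sUnion hchain.directedOn).2 fun T hT => (hc hT).1

/-- An element outside the down-set of `B` lies above some `b ∈ B`, and whatever element of `M`
is comparable to `b` is in fact below `b`. -/
lemma maxAntichain_of_maximal_subset_lowerClosure {B M : Set α} (hB : MaxAntichain B)
    (hM : Maximal (fun T => IsAntichain (· ≤ ·) T ∧ T ⊆ lowerClosure B) M) :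
    MaxAntichain M := by
  refine maxAntichain_iff.2 ⟨hM.prop.1, fun e => ?_⟩
  by_cases he : e ∈ (lowerClosure B : Set α)
  · exact exists_le_or_le_of_maximal hM he
  obtain ⟨b, hb, hbe⟩ : ∃ b ∈ B, b ≤ e := by
    obtain ⟨b, hb, hbe | heb⟩ := hB.exists_le_or_le e
    exacts [⟨b, hb, hbe⟩, absurd (mem_lowerClosure.2 ⟨b, hb, heb⟩) he]
  obtain ⟨m, hm, hmb | hbm⟩ :=
    exists_le_or_le_of_maximal hM (subset_lowerClosure hb)
  · exact ⟨m, hm, Or.inl (hmb.trans hbe)⟩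
  obtain ⟨b', hb', hmb'⟩ := mem_lowerClosure.1 (hM.prop.2 hm)
  obtain rfl := hB.1.eq hb hb' (hbm.trans hmb')
  exact ⟨m, hm, Or.inl ((le_antisymm hmb' hbm).trans_le hbe)⟩

lemma exists_maxAntichain_between {A B : Set α} (hA : IsAntichain (· ≤ ·) A)
    (hB : MaxAntichain B) (hAB : MARel A B) {w : α} (hwB : w ∈ lowerClosure B)
    (hwA : ∀ a ∈ A, ¬ w ≤ a) :
    ∃ C, MaxAntichain C ∧ MARel A C ∧ MARel C B ∧ w ∈ C ∧ ∀ a ∈ A, ¬ a < w → a ∈ C := by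
  set S := insert w {a ∈ A | ¬ a < w}
  have hS : IsAntichain (· ≤ ·) S := by
    refine (hA.subset fun a ha => ha.1).insert (fun a ha _ haw => ?_) fun a ha _ => hwA a ha.1
    exact ha.2 (haw.lt_of_ne fun h => hwA a ha.1 (h ▸ le_rfl))
  have hSB : S ⊆ lowerClosure B :=
    insert_subset hwB fun a ha => marel_iff_subset_lowerClosure.1 hAB ha.1
  obtain ⟨C, hSC, hC⟩ := hS.exists_maximal_subset hSB
  refine ⟨C, maxAntichain_of_maximal_subset_lowerClosure hB hC, fun a ha => ?_,
    marel_iff_subset_lowerClosure.2 hC.prop.2, hSC (mem_insert w _),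
    fun a ha haw => hSC (mem_insert_of_mem w ⟨ha, haw⟩)⟩
  by_cases haw : a < w
  · exact ⟨w, hSC (mem_insert w _), haw.le⟩
  · exact ⟨a, hSC (mem_insert_of_mem w ⟨ha, haw⟩), le_rfl⟩

variable {A B : Set α} {x y : α}

lemma MACovers.lt (hA : IsAntichain (· ≤ ·) A) (hB : MaxAntichain B) (h : MACovers A B)
    (hx : x ∈ A \ B) (hy : y ∈ B \ A) : x < y := by
  by_contra hxy
  have hyA : ∀ a ∈ A, ¬ y ≤ a := by
    intro a ha hya
    obtain ⟨b, hb, hab⟩ := h.1 a ha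
    obtain rfl := hB.1.eq hy.1 hb (hya.trans hab)
    exact hy.2 (le_antisymm hab hya ▸ ha)
  obtain ⟨C, hC, hAC, hCB, hyC, hAC'⟩ :=
    exists_maxAntichain_between hA hB h.1 (subset_lowerClosure hy.1) hyA
  exact h.2.2 ⟨C, hC, fun hCA => hy.2 (hCA ▸ hyC),
    fun hCB' => hx.2 (hCB' ▸ hAC' x hx.1 hxy), hAC, hCB⟩

lemma MACovers.not_lt_lt (hA : IsAntichain (· ≤ ·) A) (hB : MaxAntichain B) (h : MACovers A B)
    (hx : x ∈ A \ B) (hy : y ∈ B \ A) {z : α} (hxz : x < z) (hzy : z < y) : False := by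
  have hzA : ∀ a ∈ A, ¬ z ≤ a := fun a ha hza =>
    hA hx.1 ha (hxz.trans_le hza).ne (hxz.le.trans hza)
  obtain ⟨C, hC, hAC, hCB, hzC, -⟩ :=
    exists_maxAntichain_between hA hB h.1 (mem_lowerClosure.2 ⟨y, hy.1, hzy.le⟩) hzA
  exact h.2.2 ⟨C, hC, fun hCA => hzA z (hCA ▸ hzC) le_rfl,
    fun hCB' => hB.1 (hCB' ▸ hzC) hy.1 hzy.ne hzy.le, hAC, hCB⟩

lemma MACovers.covBy (hA : IsAntichain (· ≤ ·) A) (hB : MaxAntichain B) (h : MACovers A B)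
    (hx : x ∈ A \ B) (hy : y ∈ B \ A) : x ⋖ y :=
  ⟨h.lt hA hB hx hy, fun _ hxz hzy => h.not_lt_lt hA hB hx hy hxz hzy⟩

lemma marel_of_forall_lt (hA : IsAntichain (· ≤ ·) A) (hB : MaxAntichain B)
    (H : ∀ x ∈ A \ B, ∀ y ∈ B \ A, x < y) : MARel A B := by
  intro a ha
  by_cases haB : a ∈ B
  · exact ⟨a, haB, le_rfl⟩
  obtain ⟨b, hb, hba | hab⟩ := hB.exists_le_or_le a
  · have hne : b ≠ a := fun h => haB (h ▸ hb)
    exact absurd hba (H a ⟨ha, haB⟩ b ⟨hb, fun hbA => hA hbA ha hne hba⟩).not_ge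
  · exact ⟨b, hb, hab⟩

lemma subset_union_of_forall_covBy {C : Set α} (hA : MaxAntichain A) (hB : IsAntichain (· ≤ ·) B)
    (hC : IsAntichain (· ≤ ·) C) (hAC : MARel A C) (hCB : MARel C B)
    (H : ∀ x ∈ A \ B, ∀ y ∈ B \ A, x ⋖ y) : C ⊆ A ∪ B := by
  intro c hc
  by_contra! hcAB
  obtain ⟨hcA, hcB⟩ := not_or.1 hcAB
  obtain ⟨b, hb, hcb⟩ := hCB c hc
  have hcb : c < b := hcb.lt_of_ne fun h => hcB (h ▸ hb)
  obtain ⟨a, ha, hac | hca⟩ := hA.exists_le_or_le c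
  · have hac : a < c := hac.lt_of_ne fun h => hcA (h ▸ ha)
    have hab := hac.trans hcb
    exact (H a ⟨ha, fun haB => hB haB hb hab.ne hab.le⟩ b
      ⟨hb, fun hbA => hA.1 ha hbA hab.ne hab.le⟩).2 hac hcb
  · obtain ⟨c', hc', hac'⟩ := hAC a ha
    obtain rfl := hC.eq hc hc' (hca.trans hac')
    exact hcA (le_antisymm hca hac' ▸ ha)

lemma IsAntichain.subset_or_subset {C : Set α} (hC : IsAntichain (· ≤ ·) C) (hCAB : C ⊆ A ∪ B)
    (H : ∀ x ∈ A \ B, ∀ y ∈ B \ A, x < y) : C ⊆ A ∨ C ⊆ B := by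
  by_contra! h
  obtain ⟨⟨y, hyC, hyA⟩, ⟨x, hxC, hxB⟩⟩ := And.imp not_subset.1 not_subset.1 h
  have hxy := H x ⟨(hCAB hxC).resolve_right hxB, hxB⟩ y ⟨(hCAB hyC).resolve_left hyA, hyA⟩
  exact hC hxC hyC hxy.ne hxy.le

lemma maCovers_of_forall_covBy (hA : MaxAntichain A) (hB : MaxAntichain B) (hne : A ≠ B)
    (H : ∀ x ∈ A \ B, ∀ y ∈ B \ A, x ⋖ y) : MACovers A B := by
  have H' : ∀ x ∈ A \ B, ∀ y ∈ B \ A, x < y := fun x hx y hy => (H x hx y hy).lt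
  refine ⟨marel_of_forall_lt hA.1 hB H', hne, ?_⟩
  rintro ⟨C, hC, hCA, hCB, hAC, hCB'⟩
  rcases hC.1.subset_or_subset (subset_union_of_forall_covBy hA hB.1 hC.1 hAC hCB' H) H' with
    h | h
  · exact hCA (hC.2 A hA.1 h)
  · exact hCB (hC.2 B hB.1 h)

end

theorem stmt4_general {α : Type*} [PartialOrder α] (A B : Set α)
    (hA : MaxAntichain A) (hB : MaxAntichain B) (hne : A ≠ B) :
    MACovers A B ↔ ∀ x ∈ A \ B, ∀ y ∈ B \ A, x ⋖ y :=
  ⟨fun h _ hx _ hy => h.covBy hA.1 hB hx hy, maCovers_of_forall_covBy hA hB hne⟩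

theorem stmt4 {α : Type*} [Fintype α] [PartialOrder α] (A B : Set α)
    (hA : MaxAntichain A) (hB : MaxAntichain B) (hne : A ≠ B) :
    MACovers A B ↔ ∀ x ∈ A \ B, ∀ y ∈ B \ A, x ⋖ y :=
  stmt4_general A B hA hB hne
end

section
/- Let P be a finite partial order, let A, B be maximal antichains of P, and let x ∈ A \ B. If M is a greatest lower bound of {A, B} and J is a least upper bound of {A, B} in (MA(P), ⊑), then exactly one of the following holds: x ∈ M, or x ∈ J. -/
section

variable {α : Type*} [PartialOrder α]

theorem IsAntichain.eq_of_le_of_le {s : Set α} (hs : IsAntichain (· ≤ ·) s) {x y z : α}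
    (hx : x ∈ s) (hy : y ∈ s) (hxz : x ≤ z) (hzy : z ≤ y) : x = z := by
  obtain rfl := hs.eq hx hy (hxz.trans hzy)
  exact le_antisymm hxz hzy

theorem IsAntichain.maximal_of_subset_lowerClosure {A D : Set α} (hA : IsAntichain (· ≤ ·) A)
    (hD : D ⊆ lowerClosure A) {a : α} (ha : a ∈ A) (haD : a ∈ D) : Maximal (· ∈ D) a := by
  refine ⟨haD, fun z hz haz => ?_⟩
  obtain ⟨a', ha', hza'⟩ := mem_lowerClosure.1 (hD hz)
  exact (hA.eq_of_le_of_le ha ha' haz hza').ge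

namespace MaxAntichain

theorem exists_le_or_le_s8 {C : Set α} (hC : MaxAntichain C) (y : α) :
    ∃ c ∈ C, c ≤ y ∨ y ≤ c := by
  by_contra! h
  have hins : IsAntichain (· ≤ ·) (insert y C) :=
    hC.1.insert (fun c hc _ => (h c hc).1) (fun c hc _ => (h c hc).2)
  have hy : y ∈ C := by
    rw [hC.2 _ hins (Set.subset_insert y C)]
    exact Set.mem_insert y C
  exact (h y hy).1 le_rfl

theorem of_forall_exists_le_or_le {C : Set α} (hC : IsAntichain (· ≤ ·) C)
    (h : ∀ y, ∃ c ∈ C, c ≤ y ∨ y ≤ c) : MaxAntichain C := by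
  refine ⟨hC, fun E hE hCE => hCE.antisymm fun y hy => ?_⟩
  obtain ⟨c, hc, hcy | hyc⟩ := h y
  · rwa [← hE.eq (hCE hc) hy hcy]
  · rwa [hE.eq hy (hCE hc) hyc]

theorem toDual {A : Set α} (hA : MaxAntichain A) : MaxAntichain (α := αᵒᵈ) A :=
  ⟨hA.1.to_dual, fun E hE hAE => hA.2 E hE.to_dual hAE⟩

end MaxAntichain

/-- `C ⊑ E` also puts every element of `E` above one of `C`, i.e. `E ⊑ C` in the dual order. -/
theorem MARel.dual {C E : Set α} (hC : MaxAntichain C) (hE : IsAntichain (· ≤ ·) E)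
    (h : MARel C E) : MARel (α := αᵒᵈ) E C := by
  intro e he
  obtain ⟨c, hc, hce | hec⟩ := hC.exists_le_or_le_s8 e
  · exact ⟨c, hc, hce⟩
  · obtain ⟨e', he', hce'⟩ := h c hc
    exact ⟨c, hc, (hE.eq_of_le_of_le he he' hec hce').ge⟩

def antichainMeet (A B : Set α) : Set α :=
  {m | Maximal (· ∈ (lowerClosure A : Set α) ∩ lowerClosure B) m}

section antichainMeet

variable {A B : Set α}

theorem antichainMeet_comm (A B : Set α) : antichainMeet A B = antichainMeet B A := by
  simp only [antichainMeet, Set.inter_comm]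

theorem marel_antichainMeet_left : MARel (antichainMeet A B) A :=
  fun _ hm => mem_lowerClosure.1 hm.1.1

theorem marel_antichainMeet_right : MARel (antichainMeet A B) B :=
  antichainMeet_comm B A ▸ marel_antichainMeet_left

theorem mem_antichainMeet_of_le {x b : α} (hA : IsAntichain (· ≤ ·) A) (hx : x ∈ A)
    (hb : b ∈ B) (hxb : x ≤ b) : x ∈ antichainMeet A B :=
  hA.maximal_of_subset_lowerClosure Set.inter_subset_left hx
    ⟨subset_lowerClosure hx, mem_lowerClosure.2 ⟨b, hb, hxb⟩⟩

theorem exists_antichainMeet_le {a : α} (hA : IsAntichain (· ≤ ·) A) (hB : MaxAntichain B)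
    (ha : a ∈ A) : ∃ m ∈ antichainMeet A B, m ≤ a := by
  obtain ⟨b, hb, hba | hab⟩ := hB.exists_le_or_le_s8 a
  · exact ⟨b, antichainMeet_comm B A ▸ mem_antichainMeet_of_le hB.1 hb ha hba, hba⟩
  · exact ⟨a, mem_antichainMeet_of_le hA ha hb hab, le_rfl⟩

theorem exists_antichainMeet_le_of_notMem_lowerClosure {y : α} (hA : MaxAntichain A)
    (hB : MaxAntichain B) (hy : y ∉ lowerClosure A) : ∃ m ∈ antichainMeet A B, m ≤ y := by
  obtain ⟨a, ha, hay | hya⟩ := hA.exists_le_or_le_s8 y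
  · obtain ⟨m, hm, hma⟩ := exists_antichainMeet_le hA.1 hB ha
    exact ⟨m, hm, hma.trans hay⟩
  · exact absurd (mem_lowerClosure.2 ⟨a, ha, hya⟩) hy

theorem maxAntichain_antichainMeet [Finite α] (hA : MaxAntichain A) (hB : MaxAntichain B) :
    MaxAntichain (antichainMeet A B) := by
  refine MaxAntichain.of_forall_exists_le_or_le (setOfPred_maximal_antichain _) fun y => ?_
  by_cases hy : y ∈ (lowerClosure A : Set α) ∩ lowerClosure B
  · obtain ⟨m, hym, hm⟩ := Finite.exists_le_maximal hy
    exact ⟨m, hm, .inr hym⟩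
  rcases not_and_or.1 hy with hyA | hyB
  · obtain ⟨m, hm, hmy⟩ := exists_antichainMeet_le_of_notMem_lowerClosure hA hB hyA
    exact ⟨m, hm, .inl hmy⟩
  · obtain ⟨m, hm, hmy⟩ := exists_antichainMeet_le_of_notMem_lowerClosure hB hA hyB
    exact ⟨m, antichainMeet_comm B A ▸ hm, .inl hmy⟩

end antichainMeet

theorem mem_glb_of_le [Finite α] {A B M : Set α} {x b : α}
    (hA : MaxAntichain A) (hB : MaxAntichain B) (hMA : MARel M A)
    (hMglb : ∀ C : Set α, MaxAntichain C → MARel C A → MARel C B → MARel C M)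
    (hx : x ∈ A) (hb : b ∈ B) (hxb : x ≤ b) : x ∈ M := by
  obtain ⟨m, hm, hxm⟩ := hMglb _ (maxAntichain_antichainMeet hA hB) marel_antichainMeet_left
    marel_antichainMeet_right x (mem_antichainMeet_of_le hA.1 hx hb hxb)
  obtain ⟨a, ha, hma⟩ := hMA m hm
  rwa [hA.1.eq_of_le_of_le hx ha hxm hma]

theorem mem_lub_of_ge [Finite α] {A B J : Set α} {x b : α}
    (hA : MaxAntichain A) (hB : MaxAntichain B) (hJ : MaxAntichain J) (hAJ : MARel A J)
    (hJlub : ∀ C : Set α, MaxAntichain C → MARel A C → MARel B C → MARel J C)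
    (hx : x ∈ A) (hb : b ∈ B) (hbx : b ≤ x) : x ∈ J := by
  refine mem_glb_of_le (α := αᵒᵈ) hA.toDual hB.toDual (hAJ.dual hA hJ.1)
    (fun C hC hCA hCB => ?_) hx hb hbx
  have hC' : MaxAntichain (α := α) C := hC.toDual
  have hAC : MARel A C := hCA.dual hC hA.toDual.1
  have hBC : MARel B C := hCB.dual hC hB.toDual.1
  exact MARel.dual (α := α) hJ hC'.1 (hJlub C hC' hAC hBC)

end

theorem stmt8_general {α : Type*} [Fintype α] [PartialOrder α] (A B M J : Set α) (x : α)
    (hA : MaxAntichain A) (hB : MaxAntichain B)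
    (hJ : MaxAntichain J)
    (hMA : MARel M A) (hMB : MARel M B)
    (hMglb : ∀ C : Set α, MaxAntichain C → MARel C A → MARel C B → MARel C M)
    (hAJ : MARel A J) (hBJ : MARel B J)
    (hJlub : ∀ C : Set α, MaxAntichain C → MARel A C → MARel B C → MARel J C)
    (hx : x ∈ A \ B) :
    Xor' (x ∈ M) (x ∈ J) := by
  obtain ⟨hxA, hxB⟩ := hx
  have not_both : ¬(x ∈ M ∧ x ∈ J) := by
    rintro ⟨hxM, hxJ⟩
    obtain ⟨b, hb, hxb⟩ := hMB x hxM
    obtain ⟨j, hj, hbj⟩ := hBJ b hb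
    exact hxB (hJ.1.eq_of_le_of_le hxJ hj hxb hbj ▸ hb)
  obtain ⟨b, hb, hbx | hxb⟩ := hB.exists_le_or_le_s8 x
  · have hxJ := mem_lub_of_ge hA hB hJ hAJ hJlub hxA hb hbx
    exact .inr ⟨hxJ, fun hxM => not_both ⟨hxM, hxJ⟩⟩
  · have hxM := mem_glb_of_le hA hB hMA hMglb hxA hb hxb
    exact .inl ⟨hxM, fun hxJ => not_both ⟨hxM, hxJ⟩⟩

theorem stmt8 {α : Type*} [Fintype α] [PartialOrder α] (A B M J : Set α) (x : α)
    (hA : MaxAntichain A) (hB : MaxAntichain B)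
    (hM : MaxAntichain M) (hJ : MaxAntichain J)
    (hMA : MARel M A) (hMB : MARel M B)
    (hMglb : ∀ C : Set α, MaxAntichain C → MARel C A → MARel C B → MARel C M)
    (hAJ : MARel A J) (hBJ : MARel B J)
    (hJlub : ∀ C : Set α, MaxAntichain C → MARel A C → MARel B C → MARel J C)
    (hx : x ∈ A \ B) :
    Xor' (x ∈ M) (x ∈ J) :=
  stmt8_general A B M J x hA hB hJ hMA hMB hMglb hAJ hBJ hJlub hx
end

section
/- Let P be a finite partial order. Then P is an interval order (i.e., for all a, b, c, d, if a <_P b and c <_P d then a <_P d or c <_P b; equivalently P contains no induced 2+2) if and only if the relation ⊑ is total on the maximal antichains of P, i.e., for all maximal antichains A, B of P, either A ⊑ B or B ⊑ A. -/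
/-- Every antichain extends to a maximal antichain. -/
lemma exists_maxAntichain {α : Type*} [PartialOrder α] {S : Set α}
    (hS : IsAntichain (· ≤ ·) S) : ∃ A : Set α, S ⊆ A ∧ MaxAntichain A := by
  obtain ⟨m, hSm, hm⟩ := zorn_subset_nonempty {T : Set α | IsAntichain (· ≤ ·) T}
    (fun c hc hchain _ => by
      refine ⟨⋃₀ c, fun x hx y hy hxy hle => ?_, fun s hs => Set.subset_sUnion_of_mem hs⟩
      obtain ⟨s, hs, hxs⟩ := hx
      obtain ⟨t, ht, hyt⟩ := hy
      rcases hchain.total hs ht with h | h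
      · exact hc ht (h hxs) hyt hxy hle
      · exact hc hs hxs (h hyt) hxy hle) S hS
  exact ⟨m, hSm, hm.prop, fun B hB hmB => hm.eq_of_subset hB hmB⟩

/-- Every element is comparable to some element of a maximal antichain. -/
lemma maxAntichain_comp {α : Type*} [PartialOrder α] {A : Set α}
    (hA : MaxAntichain A) (x : α) : ∃ a ∈ A, x ≤ a ∨ a ≤ x := by
  by_cases hx : x ∈ A
  · exact ⟨x, hx, Or.inl le_rfl⟩
  by_contra h
  push_neg at h
  have hins : IsAntichain (· ≤ ·) (insert x A) := by
    refine hA.1.insert (fun b hb hne hle => ?_) (fun b hb hne hle => ?_)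
    · exact (h b hb).2 hle
    · exact (h b hb).1 hle
  have := hA.2 _ hins (Set.subset_insert x A)
  exact hx (this ▸ Set.mem_insert x A)

/-- A finite partial order is an interval order (no induced 2+2) iff `⊑` is
total on its maximal antichains. -/
theorem stmt10 {α : Type*} [Fintype α] [PartialOrder α] :
    (∀ a b c d : α, a < b → c < d → a < d ∨ c < b) ↔
    (∀ A B : Set α, MaxAntichain A → MaxAntichain B → MARel A B ∨ MARel B A) := by
  constructor
  · intro hio A B hA hB
    by_cases hAB : MARel A B
    · exact Or.inl hAB
    right
    simp only [MARel, not_forall] at hAB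
    obtain ⟨a₀, ha₀A, ha₀⟩ := hAB
    push_neg at ha₀
    intro b hb
    by_cases hbA : b ∈ A
    · exact ⟨b, hbA, le_rfl⟩
    obtain ⟨a, haA, hcomp⟩ := maxAntichain_comp hA b
    rcases hcomp with h | h
    · exact ⟨a, haA, h⟩
    · -- a ≤ b, a ∈ A, a ≠ b; show contradiction
      have hab : a < b := lt_of_le_of_ne h (fun heq => hbA (heq ▸ haA))
      -- a₀ comparable to some b' ∈ B; must have b' < a₀
      obtain ⟨b', hb'B, hcomp'⟩ := maxAntichain_comp hB a₀
      have hb'a₀ : b' < a₀ := by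
        rcases hcomp' with h' | h'
        · exact absurd h' (ha₀ b' hb'B)
        · exact lt_of_le_of_ne h' (fun heq => ha₀ b' hb'B (heq ▸ le_rfl))
      rcases hio b' a₀ a b hb'a₀ hab with h' | h'
      · exact absurd h'.le (hB.1 hb'B hb h'.ne)
      · exact absurd h'.le (hA.1 haA ha₀A h'.ne)
  · intro htot a b c d hab hcd
    by_contra h
    push_neg at h
    obtain ⟨had, hcb⟩ := h
    -- a,d incomparable; b,c incomparable
    have hadne : a ≠ d := fun h => hcb (h ▸ hcd |>.trans hab)
    have hda : ¬ d ≤ a := fun h => hcb (hcd.trans_le (h.trans hab.le))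
    have hbcne : b ≠ c := fun h => had ((h ▸ hab).trans hcd)
    have hbc : ¬ b ≤ c := fun h => had (hab.trans_le (h.trans hcd.le))
    have hS : IsAntichain (· ≤ ·) {a, d} := by
      intro x hx y hy hxy hle
      rcases hx with rfl | rfl <;> rcases hy with rfl | rfl <;> simp_all
      exact had (lt_of_le_of_ne hle hadne)
    have hT : IsAntichain (· ≤ ·) {b, c} := by
      intro x hx y hy hxy hle
      rcases hx with rfl | rfl <;> rcases hy with rfl | rfl <;> simp_all
      exact hcb (lt_of_le_of_ne hle (Ne.symm hbcne))
    obtain ⟨A, hSA, hAmax⟩ := exists_maxAntichain hS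
    obtain ⟨B, hTB, hBmax⟩ := exists_maxAntichain hT
    have haA : a ∈ A := hSA (by simp)
    have hdA : d ∈ A := hSA (by simp)
    have hbB : b ∈ B := hTB (by simp)
    have hcB : c ∈ B := hTB (by simp)
    rcases htot A B hAmax hBmax with hrel | hrel
    · obtain ⟨e, heB, hde⟩ := hrel d hdA
      have hce : c < e := hcd.trans_le hde
      exact hBmax.1 hcB heB hce.ne hce.le
    · obtain ⟨f, hfA, hbf⟩ := hrel b hbB
      have haf : a < f := hab.trans_le hbf
      exact hAmax.1 haA hfA haf.ne haf.le
end

section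
/- A finite simple graph G is a cocomparability graph if and only if there exists a partial order ⊑ on the set C(G) of maximal cliques of G such that every two maximal cliques have a least upper bound A ∨ B and a greatest lower bound A ∧ B with respect to ⊑ (i.e., (C(G), ⊑) is a lattice), and the following two conditions hold: (i) for all maximal cliques A, B, C with A ⊑ B ⊑ C, A ∩ C ⊆ B; (ii) for all maximal cliques A, B, A ∪ B ⊆ (A ∨ B) ∪ (A ∧ B). -/
/-- `G` is a cocomparability graph: there is a partial order on the vertices such
that two distinct vertices are adjacent iff they are incomparable (equivalently,
the complement of `G` has a transitive orientation). -/
def IsCocomparabilityGraph {V : Type*} (G : SimpleGraph V) : Prop :=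
  ∃ le : V → V → Prop, IsPartialOrder V le ∧
    ∀ u v : V, u ≠ v → (G.Adj u v ↔ ¬ le u v ∧ ¬ le v u)

/-- A maximal clique of `G`: a clique not properly contained in any other clique. -/
def MaxCliq {V : Type*} (G : SimpleGraph V) (A : Set V) : Prop :=
  G.IsClique A ∧ ∀ B : Set V, G.IsClique B → A ⊆ B → A = B

/-!
Maximal cliques of the incomparability graph of a finite poset are its maximal antichains. Order
them by `A ⊑ B` iff `A ⊆ ↓B` and `B ⊆ ↑A`; the join of `A` and `B` is the set of minimal elements of
`↑A ∩ ↑B`, and the meet is the order dual. A vertex of `A` lies in `↑B`, and is then minimal in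
`↑A ∩ ↑B`, or in `↓B`, and is then maximal in `↓A ∩ ↓B`: this is condition (ii).

Conversely, orient a non-edge `uv` as `u < v` when some maximal clique containing `u` lies below one
containing `v`. Applying (ii) to two maximal cliques orients every non-edge; (i) and (ii) together
show that no non-edge is oriented both ways and that the orientation is transitive.
-/

open Set

structure IsConsecutiveLattice {V : Type*} (P : Set V → Prop) (r : Set V → Set V → Prop)
    (jn mt : Set V → Set V → Set V) : Prop where
  refl : ∀ A, P A → r A A
  antisymm : ∀ A B, P A → P B → r A B → r B A → A = B
  trans : ∀ A B C, P A → P B → P C → r A B → r B C → r A C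
  sup_mem : ∀ A B, P A → P B → P (jn A B)
  le_sup_left : ∀ A B, P A → P B → r A (jn A B)
  le_sup_right : ∀ A B, P A → P B → r B (jn A B)
  sup_le : ∀ A B C, P A → P B → P C → r A C → r B C → r (jn A B) C
  inf_mem : ∀ A B, P A → P B → P (mt A B)
  inf_le_left : ∀ A B, P A → P B → r (mt A B) A
  inf_le_right : ∀ A B, P A → P B → r (mt A B) B
  le_inf : ∀ A B C, P A → P B → P C → r C A → r C B → r C (mt A B)
  inter_subset : ∀ A B C, P A → P B → P C → r A B → r B C → A ∩ C ⊆ B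
  union_subset : ∀ A B, P A → P B → A ∪ B ⊆ jn A B ∪ mt A B

theorem isConsecutiveLattice_iff {V : Type*} {P : Set V → Prop} {r : Set V → Set V → Prop}
    {jn mt : Set V → Set V → Set V} :
    IsConsecutiveLattice P r jn mt ↔
      (∀ A, P A → r A A) ∧
      (∀ A B, P A → P B → r A B → r B A → A = B) ∧
      (∀ A B C, P A → P B → P C → r A B → r B C → r A C) ∧
      (∀ A B, P A → P B →
        P (jn A B) ∧ r A (jn A B) ∧ r B (jn A B) ∧ (∀ C, P C → r A C → r B C → r (jn A B) C)) ∧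
      (∀ A B, P A → P B →
        P (mt A B) ∧ r (mt A B) A ∧ r (mt A B) B ∧ (∀ C, P C → r C A → r C B → r C (mt A B))) ∧
      (∀ A B C, P A → P B → P C → r A B → r B C → A ∩ C ⊆ B) ∧
      (∀ A B, P A → P B → A ∪ B ⊆ jn A B ∪ mt A B) := by
  refine ⟨fun h => ⟨h.refl, h.antisymm, h.trans, fun A B hA hB => ?_, fun A B hA hB => ?_,
    h.inter_subset, h.union_subset⟩, fun ⟨h₁, h₂, h₃, h₄, h₅, h₆, h₇⟩ => ?_⟩
  · exact ⟨h.sup_mem A B hA hB, h.le_sup_left A B hA hB, h.le_sup_right A B hA hB,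
      fun C hC => h.sup_le A B C hA hB hC⟩
  · exact ⟨h.inf_mem A B hA hB, h.inf_le_left A B hA hB, h.inf_le_right A B hA hB,
      fun C hC => h.le_inf A B C hA hB hC⟩
  · exact
      { refl := h₁, antisymm := h₂, trans := h₃, inter_subset := h₆, union_subset := h₇
        sup_mem A B hA hB := (h₄ A B hA hB).1
        le_sup_left A B hA hB := (h₄ A B hA hB).2.1
        le_sup_right A B hA hB := (h₄ A B hA hB).2.2.1
        sup_le A B C hA hB := (h₄ A B hA hB).2.2.2 C
        inf_mem A B hA hB := (h₅ A B hA hB).1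
        inf_le_left A B hA hB := (h₅ A B hA hB).2.1
        inf_le_right A B hA hB := (h₅ A B hA hB).2.2.1
        le_inf A B C hA hB := (h₅ A B hA hB).2.2.2 C }

section Preorder
variable {α : Type*} [Preorder α] {A : Set α}

theorem isMaxAntichain_iff_forall_mem_lowerClosure_or_mem_upperClosure :
    IsMaxAntichain (· ≤ ·) A ↔
      IsAntichain (· ≤ ·) A ∧ ∀ x, x ∈ lowerClosure A ∨ x ∈ upperClosure A := by
  simp only [mem_lowerClosure, mem_upperClosure, ← exists_or, ← and_or_left]
  refine ⟨fun hA => ⟨hA.1, fun x => ?_⟩, fun ⟨hA, hcomp⟩ => ⟨hA, fun T hT hAT => ?_⟩⟩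
  · by_contra! hx
    have hxA : x ∉ A := fun h => (hx x h).1 le_rfl
    refine hxA (hA.2 (hA.1.insert (fun b hb _ => (hx b hb).2) fun b hb _ => (hx b hb).1)
      (subset_insert x A) ▸ mem_insert x A)
  · refine (subset_antisymm hAT fun x hx => ?_)
    obtain ⟨a, ha, hxa | hax⟩ := hcomp x
    · exact hT.eq hx (hAT ha) hxa ▸ ha
    · exact (hT.eq (hAT ha) hx hax).symm ▸ ha

theorem IsMaxAntichain.mem_lowerClosure_or_mem_upperClosure (hA : IsMaxAntichain (· ≤ ·) A)
    (x : α) : x ∈ lowerClosure A ∨ x ∈ upperClosure A :=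
  (isMaxAntichain_iff_forall_mem_lowerClosure_or_mem_upperClosure.1 hA).2 x

end Preorder

section PartialOrder
variable {α : Type*} [PartialOrder α] {A B C : Set α} {x : α}

def AntichainLE (A B : Set α) : Prop := A ⊆ lowerClosure B ∧ B ⊆ upperClosure A

def antichainSup (A B : Set α) : Set α :=
  {x | Minimal (· ∈ (upperClosure A : Set α) ∩ upperClosure B) x}

def antichainInf (A B : Set α) : Set α := antichainSup (α := αᵒᵈ) A B

theorem antichainLE_toDual : AntichainLE (α := αᵒᵈ) A B ↔ AntichainLE B A := and_comm

theorem isMaxAntichain_toDual : IsMaxAntichain (α := αᵒᵈ) (· ≤ ·) A ↔ IsMaxAntichain (· ≤ ·) A :=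
  ⟨IsMaxAntichain.symm, IsMaxAntichain.symm⟩

theorem AntichainLE.refl (A : Set α) : AntichainLE A A :=
  ⟨subset_lowerClosure, subset_upperClosure⟩

theorem AntichainLE.trans (hAB : AntichainLE A B) (hBC : AntichainLE B C) : AntichainLE A C :=
  ⟨hAB.1.trans (lowerClosure_le.2 hBC.1), hBC.2.trans (le_upperClosure.2 hAB.2)⟩

theorem AntichainLE.inter_subset (hB : IsAntichain (· ≤ ·) B) (hAB : AntichainLE A B)
    (hBC : AntichainLE B C) : A ∩ C ⊆ B := by
  rintro x ⟨hxA, hxC⟩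
  obtain ⟨b, hb, hxb⟩ := hAB.1 hxA
  obtain ⟨b', hb', hb'x⟩ := hBC.2 hxC
  obtain rfl : b' = b := hB.eq hb' hb (hb'x.trans hxb)
  exact le_antisymm hxb hb'x ▸ hb

theorem AntichainLE.antisymm (hA : IsAntichain (· ≤ ·) A) (hB : IsAntichain (· ≤ ·) B)
    (hAB : AntichainLE A B) (hBA : AntichainLE B A) : A = B := by
  refine subset_antisymm ?_ ?_
  · simpa using hAB.inter_subset hB hBA
  · simpa using hBA.inter_subset hA hAB

theorem IsAntichain.subset_lowerClosure_of_subset_upperClosure (hA : IsAntichain (· ≤ ·) A)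
    (hB : IsMaxAntichain (· ≤ ·) B) (hBA : B ⊆ upperClosure A) : A ⊆ lowerClosure B := by
  intro a ha
  rcases hB.mem_lowerClosure_or_mem_upperClosure a with h | ⟨b, hb, hba⟩
  · exact h
  obtain ⟨a', ha', ha'b⟩ := hBA hb
  obtain rfl : a' = a := hA.eq ha' ha (ha'b.trans hba)
  exact le_antisymm hba ha'b ▸ subset_lowerClosure hb

theorem antichainSup_comm (A B : Set α) : antichainSup A B = antichainSup B A := by
  simp only [antichainSup, inter_comm]

theorem antichainInf_comm (A B : Set α) : antichainInf A B = antichainInf B A :=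
  antichainSup_comm (α := αᵒᵈ) A B

theorem isAntichain_antichainSup (A B : Set α) : IsAntichain (· ≤ ·) (antichainSup A B) :=
  setOfPred_minimal_antichain _

theorem antichainSup_subset_upperClosure : antichainSup A B ⊆ upperClosure A :=
  fun _ hx => hx.prop.1

theorem IsAntichain.mem_antichainSup (hA : IsAntichain (· ≤ ·) A) (hx : x ∈ A)
    (hxB : x ∈ upperClosure B) : x ∈ antichainSup A B :=
  (hA.minimal_mem_upperClosure_iff_mem.2 hx).mono inter_subset_left ⟨subset_upperClosure hx, hxB⟩

theorem mem_upperClosure_antichainSup [Finite α] (hxA : x ∈ upperClosure A)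
    (hxB : x ∈ upperClosure B) : x ∈ upperClosure (antichainSup A B) := by
  obtain ⟨j, hjx, hj⟩ := Finite.exists_le_minimal
    (p := (· ∈ (upperClosure A : Set α) ∩ upperClosure B)) ⟨hxA, hxB⟩
  exact ⟨j, hj, hjx⟩

theorem IsAntichain.subset_lowerClosure_antichainSup (hA : IsAntichain (· ≤ ·) A)
    (hB : IsMaxAntichain (· ≤ ·) B) : A ⊆ lowerClosure (antichainSup A B) := by
  intro a ha
  rcases hB.mem_lowerClosure_or_mem_upperClosure a with ⟨b, hb, hab⟩ | haB
  · exact ⟨b, antichainSup_comm B A ▸ hB.1.mem_antichainSup hb ⟨a, ha, hab⟩, hab⟩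
  · exact subset_lowerClosure (hA.mem_antichainSup ha haB)

theorem IsMaxAntichain.antichainSup [Finite α] (hA : IsMaxAntichain (· ≤ ·) A)
    (hB : IsMaxAntichain (· ≤ ·) B) : IsMaxAntichain (· ≤ ·) (antichainSup A B) := by
  have hAJ := lowerClosure_le.2 (hA.1.subset_lowerClosure_antichainSup hB)
  have hBJ := lowerClosure_le.2 (antichainSup_comm A B ▸ hB.1.subset_lowerClosure_antichainSup hA)
  refine isMaxAntichain_iff_forall_mem_lowerClosure_or_mem_upperClosure.2
    ⟨isAntichain_antichainSup A B, fun x => ?_⟩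
  rcases hA.mem_lowerClosure_or_mem_upperClosure x with hxA | hxA
  · exact Or.inl (hAJ hxA)
  rcases hB.mem_lowerClosure_or_mem_upperClosure x with hxB | hxB
  · exact Or.inl (hBJ hxB)
  exact Or.inr (mem_upperClosure_antichainSup hxA hxB)

theorem IsAntichain.le_antichainSup_left (hA : IsAntichain (· ≤ ·) A)
    (hB : IsMaxAntichain (· ≤ ·) B) : AntichainLE A (antichainSup A B) :=
  ⟨hA.subset_lowerClosure_antichainSup hB, antichainSup_subset_upperClosure⟩

theorem le_antichainSup_right (hA : IsMaxAntichain (· ≤ ·) A)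
    (hB : IsAntichain (· ≤ ·) B) : AntichainLE B (antichainSup A B) :=
  antichainSup_comm B A ▸ hB.le_antichainSup_left hA

theorem antichainSup_le [Finite α] (hC : IsMaxAntichain (· ≤ ·) C) (hAC : AntichainLE A C)
    (hBC : AntichainLE B C) : AntichainLE (antichainSup A B) C := by
  have hCJ : C ⊆ upperClosure (antichainSup A B) :=
    fun c hc => mem_upperClosure_antichainSup (hAC.2 hc) (hBC.2 hc)
  exact ⟨(isAntichain_antichainSup A B).subset_lowerClosure_of_subset_upperClosure hC hCJ, hCJ⟩

theorem IsMaxAntichain.antichainInf [Finite α] (hA : IsMaxAntichain (· ≤ ·) A)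
    (hB : IsMaxAntichain (· ≤ ·) B) : IsMaxAntichain (· ≤ ·) (antichainInf A B) :=
  isMaxAntichain_toDual.1 ((isMaxAntichain_toDual.2 hA).antichainSup (isMaxAntichain_toDual.2 hB))

theorem IsAntichain.antichainInf_le_left (hA : IsAntichain (· ≤ ·) A)
    (hB : IsMaxAntichain (· ≤ ·) B) : AntichainLE (antichainInf A B) A :=
  antichainLE_toDual.1 (hA.to_dual.le_antichainSup_left (isMaxAntichain_toDual.2 hB))

theorem antichainInf_le_right (hA : IsMaxAntichain (· ≤ ·) A)
    (hB : IsAntichain (· ≤ ·) B) : AntichainLE (antichainInf A B) B :=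
  antichainInf_comm B A ▸ hB.antichainInf_le_left hA

theorem le_antichainInf [Finite α] (hC : IsMaxAntichain (· ≤ ·) C) (hCA : AntichainLE C A)
    (hCB : AntichainLE C B) : AntichainLE C (antichainInf A B) :=
  antichainLE_toDual.1 (antichainSup_le (isMaxAntichain_toDual.2 hC)
    (antichainLE_toDual.2 hCA) (antichainLE_toDual.2 hCB))

theorem IsAntichain.subset_antichainSup_union_antichainInf (hA : IsAntichain (· ≤ ·) A)
    (hB : IsMaxAntichain (· ≤ ·) B) : A ⊆ antichainSup A B ∪ antichainInf A B := fun a ha =>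
  (hB.mem_lowerClosure_or_mem_upperClosure a).symm.imp (hA.mem_antichainSup ha)
    (hA.to_dual.mem_antichainSup ha)

theorem isConsecutiveLattice_isMaxAntichain [Finite α] :
    IsConsecutiveLattice (IsMaxAntichain (α := α) (· ≤ ·)) AntichainLE antichainSup
      antichainInf where
  refl A _ := .refl A
  antisymm _ _ hA hB := AntichainLE.antisymm hA.1 hB.1
  trans _ _ _ _ _ _ := AntichainLE.trans
  sup_mem _ _ hA hB := hA.antichainSup hB
  le_sup_left _ _ hA hB := hA.1.le_antichainSup_left hB
  le_sup_right _ _ hA hB := le_antichainSup_right hA hB.1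
  sup_le _ _ _ _ _ hC := antichainSup_le hC
  inf_mem _ _ hA hB := hA.antichainInf hB
  inf_le_left _ _ hA hB := hA.1.antichainInf_le_left hB
  inf_le_right _ _ hA hB := antichainInf_le_right hA hB.1
  le_inf _ _ _ _ _ hC := le_antichainInf hC
  inter_subset _ _ _ _ hB _ := AntichainLE.inter_subset hB.1
  union_subset A B hA hB := union_subset (hA.1.subset_antichainSup_union_antichainInf hB)
    (antichainSup_comm A B ▸ antichainInf_comm A B ▸ hB.1.subset_antichainSup_union_antichainInf hA)

end PartialOrder

theorem maxCliq_eq_isMaxAntichain {α : Type*} [LE α] {G : SimpleGraph α}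
    (hG : ∀ u v, u ≠ v → (G.Adj u v ↔ ¬u ≤ v ∧ ¬v ≤ u)) :
    MaxCliq G = IsMaxAntichain (· ≤ ·) := by
  have : G.IsClique = IsAntichain (· ≤ ·) := by
    ext s
    exact ⟨fun hs _ hu _ hv huv => ((hG _ _ huv).1 (hs hu hv huv)).1,
      fun hs _ hu _ hv huv => (hG _ _ huv).2 ⟨hs hu hv huv, hs hv hu huv.symm⟩⟩
  ext A
  rw [MaxCliq, this]
  rfl

theorem maxCliq_iff_maximal_isClique {V : Type*} {G : SimpleGraph V} {A : Set V} :
    MaxCliq G A ↔ Maximal G.IsClique A := by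
  simp only [MaxCliq, maximal_iff]

namespace MaxCliq
variable {V : Type*} {G : SimpleGraph V}

theorem exists_superset [Finite V] {s : Set V} (hs : G.IsClique s) :
    ∃ A, MaxCliq G A ∧ s ⊆ A := by
  obtain ⟨A, hsA, hA⟩ := Finite.exists_le_maximal hs
  exact ⟨A, maxCliq_iff_maximal_isClique.2 hA, hsA⟩

theorem exists_mem [Finite V] (u : V) : ∃ A, MaxCliq G A ∧ u ∈ A := by
  obtain ⟨A, hA, huA⟩ := exists_superset (G.isClique_singleton u)
  exact ⟨A, hA, huA rfl⟩

end MaxCliq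

theorem SimpleGraph.IsClique.notMem_of_compl_adj {V : Type*} {G : SimpleGraph V} {A : Set V}
    {u v : V} (hA : G.IsClique A) (huv : Gᶜ.Adj u v) (hu : u ∈ A) : v ∉ A :=
  fun hv => huv.2 (hA hu hv huv.1)

def CliqueBelow {V : Type*} (G : SimpleGraph V) (r : Set V → Set V → Prop) (u v : V) : Prop :=
  ∃ C D, MaxCliq G C ∧ MaxCliq G D ∧ u ∈ C ∧ v ∈ D ∧ r C D

namespace IsConsecutiveLattice
variable {V : Type*} {G : SimpleGraph V} {r : Set V → Set V → Prop} {jn mt : Set V → Set V → Set V}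
  (h : IsConsecutiveLattice (MaxCliq G) r jn mt) {u v w : V}
include h

theorem forall_cliqueBelow_or_forall_cliqueBelow {D E : Set V} (hD : MaxCliq G D)
    (hE : MaxCliq G E) (hv : v ∈ D) :
    (∀ x ∈ E, CliqueBelow G r x v) ∨ ∀ x ∈ E, CliqueBelow G r v x := by
  rcases h.union_subset E D hE hD (Or.inr hv) with hvJ | hvM
  · exact Or.inl fun x hx =>
      ⟨E, jn E D, hE, h.sup_mem E D hE hD, hx, hvJ, h.le_sup_left E D hE hD⟩
  · exact Or.inr fun x hx =>
      ⟨mt E D, E, h.inf_mem E D hE hD, hE, hvM, hx, h.inf_le_left E D hE hD⟩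

theorem cliqueBelow_total [Finite V] (u v : V) : CliqueBelow G r u v ∨ CliqueBelow G r v u := by
  obtain ⟨E, hE, huE⟩ := MaxCliq.exists_mem (G := G) u
  obtain ⟨D, hD, hvD⟩ := MaxCliq.exists_mem (G := G) v
  exact (h.forall_cliqueBelow_or_forall_cliqueBelow hD hE hvD).imp (· u huE) (· u huE)

theorem not_cliqueBelow_of_cliqueBelow (hnuv : Gᶜ.Adj u v) (huv : CliqueBelow G r u v) :
    ¬CliqueBelow G r v u := by
  obtain ⟨C, D, hC, hD, huC, hvD, hCD⟩ := huv
  rintro ⟨C', D', hC', hD', hvC', huD', hC'D'⟩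
  have hM := h.inf_mem C C' hC hC'
  rcases h.union_subset C C' hC hC' (Or.inr hvC') with hvJ | hvM
  · rcases h.union_subset C C' hC hC' (Or.inl huC) with huJ | huM
    · exact (h.sup_mem C C' hC hC').1.notMem_of_compl_adj hnuv huJ hvJ
    · have huC' := h.inter_subset _ _ _ hM hC' hD' (h.inf_le_right C C' hC hC') hC'D' ⟨huM, huD'⟩
      exact hC'.1.notMem_of_compl_adj hnuv huC' hvC'
  · have hvC := h.inter_subset _ _ _ hM hC hD (h.inf_le_left C C' hC hC') hCD ⟨hvM, hvD⟩
    exact hC.1.notMem_of_compl_adj hnuv huC hvC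

theorem cliqueBelow_trans (hnvw : Gᶜ.Adj v w) (huv : CliqueBelow G r u v)
    (hvw : CliqueBelow G r v w) : CliqueBelow G r u w := by
  obtain ⟨C, D, hC, hD, huC, hvD, hCD⟩ := huv
  obtain ⟨C', D', hC', hD', -, hwD', -⟩ := id hvw
  rcases h.union_subset D D' hD hD' (Or.inr hwD') with hwJ | hwM
  · exact ⟨C, jn D D', hC, h.sup_mem D D' hD hD', huC, hwJ,
      h.trans _ _ _ hC hD (h.sup_mem D D' hD hD') hCD (h.le_sup_left D D' hD hD')⟩
  · exact absurd ⟨mt D D', D, h.inf_mem D D' hD hD', hD, hwM, hvD, h.inf_le_left D D' hD hD'⟩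
      (h.not_cliqueBelow_of_cliqueBelow hnvw hvw)

theorem compl_adj_of_cliqueBelow [Finite V] (hnuv : Gᶜ.Adj u v) (hnvw : Gᶜ.Adj v w)
    (huv : CliqueBelow G r u v) (hvw : CliqueBelow G r v w) : Gᶜ.Adj u w := by
  refine ⟨?_, fun huw => ?_⟩
  · rintro rfl
    exact h.not_cliqueBelow_of_cliqueBelow hnuv huv hvw
  obtain ⟨E, hE, huwE⟩ := MaxCliq.exists_superset (SimpleGraph.isClique_pair.2 fun _ => huw)
  obtain ⟨D, hD, hvD⟩ := MaxCliq.exists_mem (G := G) v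
  rcases h.forall_cliqueBelow_or_forall_cliqueBelow hD hE hvD with hbelow | habove
  · exact h.not_cliqueBelow_of_cliqueBelow hnvw hvw (hbelow w (huwE (by simp)))
  · exact h.not_cliqueBelow_of_cliqueBelow hnuv huv (habove u (huwE (by simp)))

theorem isCocomparabilityGraph [Finite V] : IsCocomparabilityGraph G := by
  let lt u v := Gᶜ.Adj u v ∧ CliqueBelow G r u v
  have : IsStrictOrder V lt :=
    { irrefl := fun u hu => hu.1.ne rfl
      trans := fun _ _ _ huv hvw => ⟨h.compl_adj_of_cliqueBelow huv.1 hvw.1 huv.2 hvw.2,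
        h.cliqueBelow_trans hvw.1 huv.2 hvw.2⟩ }
  let := partialOrderOfSO lt
  refine ⟨(· ≤ ·), inferInstance, fun u v huv => ⟨fun hadj => ?_, fun hinc => ?_⟩⟩
  · constructor <;> rintro (rfl | ⟨hc, -⟩)
    exacts [huv rfl, hc.2 hadj, huv rfl, hc.2 hadj.symm]
  · by_contra hnadj
    have hc : Gᶜ.Adj u v := ⟨huv, hnadj⟩
    rcases h.cliqueBelow_total u v with hb | hb
    exacts [hinc.1 (Or.inr ⟨hc, hb⟩), hinc.2 (Or.inr ⟨hc.symm, hb⟩)]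

end IsConsecutiveLattice

/-- A finite graph is a cocomparability graph iff its maximal cliques carry a
lattice structure satisfying the consecutiveness condition (i) and the
union condition (ii). -/
theorem stmt11 {V : Type*} [Fintype V] (G : SimpleGraph V) :
    IsCocomparabilityGraph G ↔
    ∃ (r : Set V → Set V → Prop) (jn mt : Set V → Set V → Set V),
      (∀ A, MaxCliq G A → r A A) ∧
      (∀ A B, MaxCliq G A → MaxCliq G B → r A B → r B A → A = B) ∧
      (∀ A B C, MaxCliq G A → MaxCliq G B → MaxCliq G C → r A B → r B C → r A C) ∧
      (∀ A B, MaxCliq G A → MaxCliq G B →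
        MaxCliq G (jn A B) ∧ r A (jn A B) ∧ r B (jn A B) ∧
        (∀ C, MaxCliq G C → r A C → r B C → r (jn A B) C)) ∧
      (∀ A B, MaxCliq G A → MaxCliq G B →
        MaxCliq G (mt A B) ∧ r (mt A B) A ∧ r (mt A B) B ∧
        (∀ C, MaxCliq G C → r C A → r C B → r C (mt A B))) ∧
      (∀ A B C, MaxCliq G A → MaxCliq G B → MaxCliq G C → r A B → r B C → A ∩ C ⊆ B) ∧
      (∀ A B, MaxCliq G A → MaxCliq G B → A ∪ B ⊆ jn A B ∪ mt A B) := by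
  simp only [← isConsecutiveLattice_iff]
  refine ⟨fun ⟨le, hle, hG⟩ => ?_, fun ⟨_, _, _, h⟩ => h.isCocomparabilityGraph⟩
  let : PartialOrder V :=
    { le, le_refl := hle.refl, le_trans := hle.trans, le_antisymm := hle.antisymm }
  exact ⟨AntichainLE, antichainSup, antichainInf,
    maxCliq_eq_isMaxAntichain hG ▸ isConsecutiveLattice_isMaxAntichain⟩
end

section
/- Let G be a finite cocomparability graph and let ⊑ be a partial order on the set C(G) of maximal cliques of G such that every two maximal cliques have a least upper bound A ∨ B and a greatest lower bound A ∧ B under ⊑, satisfying (i) for all maximal cliques A ⊑ B ⊑ C, A ∩ C ⊆ B, and (ii) for all maximal cliques A, B, A ∪ B ⊆ (A ∨ B) ∪ (A ∧ B). Then the following are equivalent: (1) there exists a partial order ≤_P on V(G) such that two distinct vertices are adjacent in G iff they are incomparable under ≤_P, and for all maximal cliques A, B of G, A ⊑ B holds iff for every a ∈ A there exists b ∈ B with a ≤_P b; (2) condition (iii) holds: for all maximal cliques A, B, A ∩ B ⊆ (A ∨ B) and A ∩ B ⊆ (A ∧ B). -/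
/-!
(1) ⇒ (iii): if `⊑` is the maximal-antichain order of `P`, the maximal elements of `A ∪ B`
extend to a maximal antichain `E` above `A` and `B`, hence above `A ∨ B`. A vertex
`x ∈ A ∩ B` outside `A ∨ B` is comparable to some `y ∈ A ∨ B`: `x < y` contradicts
`A ∨ B ⊑ E ∋ x`, and `y < x` contradicts `A ⊑ A ∨ B`. The meet is the order dual.

(iii) ⇒ (1): for non-adjacent `u ≠ v` put `u < v` if `u` lies in a maximal clique below one
containing `v`. Conditions (i)–(iii) show that `u < v` forces `u ∈ A ∧ B` and `v ∈ B ∨ A` for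
all maximal cliques `A ∋ u`, `B ∋ v`. Transitivity follows: were `u < v < w` with `u, w` in a
common maximal clique `E`, then `B ∧ E ⊑ E ⊑ E ∨ B'` would both contain `v`, so `v ∈ E` by (i).
Condition (ii) makes non-adjacent vertices comparable, and `A ⊑_{MA(P)} B` gives `A ⊆ A ∧ B`,
so `A = A ∧ B ⊑ B`.
-/

section Definitions

variable {V : Type*} (G : SimpleGraph V) (r : Set V → Set V → Prop)

def IsIncomparabilityGraph [LE V] : Prop :=
  ∀ u v, u ≠ v → (G.Adj u v ↔ ¬ u ≤ v ∧ ¬ v ≤ u)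

def MaxCliqTrans : Prop :=
  ∀ A B C, MaxCliq G A → MaxCliq G B → MaxCliq G C → r A B → r B C → r A C

def IsMaxCliqJoin (jn : Set V → Set V → Set V) : Prop :=
  ∀ A B, MaxCliq G A → MaxCliq G B →
    MaxCliq G (jn A B) ∧ r A (jn A B) ∧ r B (jn A B) ∧
      ∀ C, MaxCliq G C → r A C → r B C → r (jn A B) C

def IsMaxCliqMeet (mt : Set V → Set V → Set V) : Prop :=
  IsMaxCliqJoin G (flip r) mt

/-- Condition (i). -/
def MaxCliqConvex : Prop :=
  ∀ A B C, MaxCliq G A → MaxCliq G B → MaxCliq G C → r A B → r B C → A ∩ C ⊆ B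

/-- Condition (ii). -/
def UnionSubsetJoinUnionMeet (jn mt : Set V → Set V → Set V) : Prop :=
  ∀ A B, MaxCliq G A → MaxCliq G B → A ∪ B ⊆ jn A B ∪ mt A B

/-- Condition (iii) is `InterSubset G jn ∧ InterSubset G mt`. -/
def InterSubset (f : Set V → Set V → Set V) : Prop :=
  ∀ A B, MaxCliq G A → MaxCliq G B → A ∩ B ⊆ f A B

/-- The strict part of the vertex order `P` reconstructed from `r` under condition (iii). -/
def VertexLT (u v : V) : Prop :=
  Gᶜ.Adj u v ∧ ∃ A B, MaxCliq G A ∧ MaxCliq G B ∧ r A B ∧ u ∈ A ∧ v ∈ B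

end Definitions

section MaxCliq

variable {V : Type*} {G : SimpleGraph V} {A : Set V}

theorem MaxCliq.exists_superset_s13 [Finite V] {S : Set V} (hS : G.IsClique S) :
    ∃ M, MaxCliq G M ∧ S ⊆ M := by
  obtain ⟨M, hSM, hM⟩ := Finite.exists_le_maximal (p := G.IsClique) hS
  exact ⟨M, ⟨hM.prop, fun B hB hMB => hM.eq_of_le hB hMB⟩, hSM⟩

theorem MaxCliq.exists_compl_adj (hA : MaxCliq G A) {v : V} (hv : v ∉ A) :
    ∃ a ∈ A, Gᶜ.Adj v a := by
  by_contra! h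
  have hvA : G.IsClique (insert v A) := hA.1.insert fun a ha hva =>
    by_contra fun hadj => h a ha ((G.compl_adj v a).2 ⟨hva, hadj⟩)
  exact hv (hA.2 _ hvA (Set.subset_insert v A) ▸ Set.mem_insert v A)

end MaxCliq

namespace IsIncomparabilityGraph

variable {α : Type*} [PartialOrder α] {G : SimpleGraph α}

theorem isClique_iff (hG : IsIncomparabilityGraph G) {s : Set α} :
    G.IsClique s ↔ IsAntichain (· ≤ ·) s :=
  ⟨fun h a ha b hb hab => ((hG a b hab).1 (h ha hb hab)).1,
    fun h a ha b hb hab => (hG a b hab).2 ⟨h ha hb hab, h hb ha hab.symm⟩⟩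

theorem le_or_le (hG : IsIncomparabilityGraph G) {u v : α} (h : Gᶜ.Adj u v) :
    u ≤ v ∨ v ≤ u := by
  have hne := h.ne
  rw [SimpleGraph.compl_adj, hG u v hne] at h
  tauto

theorem dual (hG : IsIncomparabilityGraph G) : IsIncomparabilityGraph (V := αᵒᵈ) G :=
  fun u v huv => (hG u v huv).trans and_comm

theorem exists_maxCliq_of_maximal [Finite α] (hG : IsIncomparabilityGraph G) (S : Set α) :
    ∃ E, MaxCliq G E ∧ (∀ s ∈ S, ∃ e ∈ E, s ≤ e) ∧ ∀ x, Maximal (· ∈ S) x → x ∈ E := by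
  obtain ⟨E, hE, hmaxE⟩ :=
    MaxCliq.exists_superset_s13 (hG.isClique_iff.2 (setOfPred_maximal_antichain (· ∈ S)))
  refine ⟨E, hE, fun s hs => ?_, fun x hx => hmaxE hx⟩
  obtain ⟨m, hsm, hm⟩ := Finite.exists_le_maximal (p := (· ∈ S)) hs
  exact ⟨m, hmaxE hm, hsm⟩

theorem forall_exists_ge (hG : IsIncomparabilityGraph G) {A B : Set α} (hA : MaxCliq G A)
    (hB : G.IsClique B) (h : ∀ a ∈ A, ∃ b ∈ B, a ≤ b) : ∀ b ∈ B, ∃ a ∈ A, a ≤ b := by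
  intro b hb
  by_cases hbA : b ∈ A
  · exact ⟨b, hbA, le_rfl⟩
  obtain ⟨a, ha, hba⟩ := hA.exists_compl_adj hbA
  refine (hG.le_or_le hba).elim (fun hle => ?_) fun hle => ⟨a, ha, hle⟩
  obtain ⟨b', hb', hab'⟩ := h a ha
  obtain rfl := (hG.isClique_iff.1 hB).eq hb hb' (hle.trans hab')
  exact absurd (le_antisymm hle hab') hba.ne

end IsIncomparabilityGraph

section Forward

variable {α : Type*} [PartialOrder α] [Finite α] {G : SimpleGraph α} {r : Set α → Set α → Prop}

theorem interSubset_of_isMaxCliqJoin (hG : IsIncomparabilityGraph G)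
    {jn : Set α → Set α → Set α} (hjn : IsMaxCliqJoin G r jn)
    (hr : ∀ A B, MaxCliq G A → MaxCliq G B → (r A B ↔ ∀ a ∈ A, ∃ b ∈ B, a ≤ b)) :
    InterSubset G jn := by
  intro A B hA hB x ⟨hxA, hxB⟩
  obtain ⟨hJ, hAJ, -, hJ_least⟩ := hjn A B hA hB
  have hx : Maximal (· ∈ A ∪ B) x := ⟨Or.inl hxA, fun y hy hxy =>
    (hy.elim (fun hy => (hG.isClique_iff.1 hA.1).eq hxA hy hxy)
      fun hy => (hG.isClique_iff.1 hB.1).eq hxB hy hxy).ge⟩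
  obtain ⟨E, hE, hE_ge, hE_max⟩ := hG.exists_maxCliq_of_maximal (A ∪ B)
  have hJE : r (jn A B) E := hJ_least E hE
    ((hr A E hA hE).2 fun a ha => hE_ge a (Or.inl ha))
    ((hr B E hB hE).2 fun b hb => hE_ge b (Or.inr hb))
  by_contra hxJ
  obtain ⟨y, hy, hxy⟩ := hJ.exists_compl_adj hxJ
  rcases hG.le_or_le hxy with hle | hle
  · obtain ⟨e, he, hye⟩ := (hr _ _ hJ hE).1 hJE y hy
    obtain rfl := (hG.isClique_iff.1 hE.1).eq (hE_max x hx) he (hle.trans hye)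
    exact hxy.ne (le_antisymm hle hye)
  · obtain ⟨j, hj, hxj⟩ := (hr A _ hA hJ).1 hAJ x hxA
    obtain rfl := (hG.isClique_iff.1 hJ.1).eq hy hj (hle.trans hxj)
    exact hxy.ne (le_antisymm hxj hle)

theorem interSubset_of_isMaxCliqMeet (hG : IsIncomparabilityGraph G)
    {mt : Set α → Set α → Set α} (hmt : IsMaxCliqMeet G r mt)
    (hr : ∀ A B, MaxCliq G A → MaxCliq G B → (r A B ↔ ∀ a ∈ A, ∃ b ∈ B, a ≤ b)) :
    InterSubset G mt :=
  interSubset_of_isMaxCliqJoin (α := αᵒᵈ) hG.dual hmt fun A B hA hB =>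
    (hr B A hB hA).trans ⟨hG.forall_exists_ge hB hA.1, hG.dual.forall_exists_ge hA hB.1⟩

end Forward

section Reverse

variable {V : Type*} {G : SimpleGraph V} {r : Set V → Set V → Prop} {jn mt : Set V → Set V → Set V}

theorem MaxCliqTrans.flip (h : MaxCliqTrans G r) : MaxCliqTrans G (flip r) :=
  fun A B C hA hB hC hAB hBC => h C B A hC hB hA hBC hAB

theorem MaxCliqConvex.flip (h : MaxCliqConvex G r) : MaxCliqConvex G (flip r) := by
  intro A B C hA hB hC hAB hBC
  rw [Set.inter_comm]
  exact h C B A hC hB hA hBC hAB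

theorem UnionSubsetJoinUnionMeet.swap (h : UnionSubsetJoinUnionMeet G jn mt) :
    UnionSubsetJoinUnionMeet G mt jn :=
  fun A B hA hB => (h A B hA hB).trans (Set.union_comm _ _).subset

theorem vertexLT_flip {u v : V} : VertexLT G (flip r) u v ↔ VertexLT G r v u :=
  ⟨fun ⟨h, A, B, hA, hB, hr, hu, hv⟩ => ⟨h.symm, B, A, hB, hA, hr, hv, hu⟩,
    fun ⟨h, A, B, hA, hB, hr, hv, hu⟩ => ⟨h.symm, B, A, hB, hA, hr, hu, hv⟩⟩

theorem mem_meet_of_mem_upperBound (hjn : IsMaxCliqJoin G r jn) (hi : MaxCliqConvex G r)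
    (hii : UnionSubsetJoinUnionMeet G jn mt) {A B J : Set V} (hA : MaxCliq G A) (hB : MaxCliq G B)
    (hJ : MaxCliq G J) (hAJ : r A J) (hBJ : r B J) {u v : V} (huv : Gᶜ.Adj u v)
    (hu : u ∈ A) (hv : v ∈ B) (hvJ : v ∈ J) : u ∈ mt A B := by
  obtain ⟨hJAB, -, hB_jn, hjn_least⟩ := hjn A B hA hB
  have hv_jn : v ∈ jn A B := hi B _ J hB hJAB hJ hB_jn (hjn_least J hJ hAJ hBJ) ⟨hv, hvJ⟩
  refine (hii A B hA hB (Or.inl hu)).resolve_left fun hu_jn => ?_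
  exact ((G.compl_adj u v).1 huv).2 (hJAB.1 hu_jn hv_jn huv.ne)

theorem mem_meet_of_mem_of_rel (htrans : MaxCliqTrans G r) (hjn : IsMaxCliqJoin G r jn)
    (hi : MaxCliqConvex G r) (hii : UnionSubsetJoinUnionMeet G jn mt) (hj : InterSubset G jn)
    {A₀ B₀ C : Set V} (hA₀ : MaxCliq G A₀) (hB₀ : MaxCliq G B₀) (hC : MaxCliq G C)
    (hr : r A₀ B₀) {u v : V} (huv : Gᶜ.Adj u v) (hu : u ∈ A₀) (hv : v ∈ B₀) (hvC : v ∈ C) :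
    u ∈ mt A₀ C := by
  obtain ⟨hJ, hB₀J, hCJ, -⟩ := hjn B₀ C hB₀ hC
  exact mem_meet_of_mem_upperBound hjn hi hii hA₀ hC hJ (htrans _ _ _ hA₀ hB₀ hJ hr hB₀J) hCJ
    huv hu hvC (hj B₀ C hB₀ hC ⟨hv, hvC⟩)

theorem mem_join_of_mem_of_rel (htrans : MaxCliqTrans G r) (hmt : IsMaxCliqMeet G r mt)
    (hi : MaxCliqConvex G r) (hii : UnionSubsetJoinUnionMeet G jn mt) (hm : InterSubset G mt)
    {A₀ B₀ C : Set V} (hA₀ : MaxCliq G A₀) (hB₀ : MaxCliq G B₀) (hC : MaxCliq G C)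
    (hr : r A₀ B₀) {u v : V} (huv : Gᶜ.Adj u v) (hu : u ∈ A₀) (hv : v ∈ B₀) (huC : u ∈ C) :
    v ∈ jn B₀ C :=
  mem_meet_of_mem_of_rel htrans.flip hmt hi.flip hii.swap hm hB₀ hA₀ hC hr huv.symm hv hu huC

theorem VertexLT.mem_meet (htrans : MaxCliqTrans G r) (hjn : IsMaxCliqJoin G r jn)
    (hmt : IsMaxCliqMeet G r mt) (hi : MaxCliqConvex G r) (hii : UnionSubsetJoinUnionMeet G jn mt)
    (hj : InterSubset G jn) (hm : InterSubset G mt) {u v : V} (hlt : VertexLT G r u v)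
    {A B : Set V} (hA : MaxCliq G A) (hB : MaxCliq G B) (hu : u ∈ A) (hv : v ∈ B) : u ∈ mt A B := by
  obtain ⟨huv, A₀, B₀, hA₀, hB₀, hr, hu₀, hv₀⟩ := hlt
  obtain ⟨hQ, -, hAQ, -⟩ := hjn B₀ A hB₀ hA
  exact mem_meet_of_mem_of_rel htrans hjn hi hii hj hA hQ hB hAQ huv hu
    (mem_join_of_mem_of_rel htrans hmt hi hii hm hA₀ hB₀ hA hr huv hu₀ hv₀ hu) hv

theorem VertexLT.mem_join (htrans : MaxCliqTrans G r) (hjn : IsMaxCliqJoin G r jn)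
    (hmt : IsMaxCliqMeet G r mt) (hi : MaxCliqConvex G r) (hii : UnionSubsetJoinUnionMeet G jn mt)
    (hj : InterSubset G jn) (hm : InterSubset G mt) {u v : V} (hlt : VertexLT G r u v)
    {A B : Set V} (hA : MaxCliq G A) (hB : MaxCliq G B) (hu : u ∈ A) (hv : v ∈ B) : v ∈ jn B A :=
  (vertexLT_flip.2 hlt).mem_meet htrans.flip hmt hjn hi.flip hii.swap hm hj hB hA hv hu

theorem VertexLT.trans [Finite V] (htrans : MaxCliqTrans G r) (hjn : IsMaxCliqJoin G r jn)
    (hmt : IsMaxCliqMeet G r mt) (hi : MaxCliqConvex G r) (hii : UnionSubsetJoinUnionMeet G jn mt)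
    (hj : InterSubset G jn) (hm : InterSubset G mt) {u v w : V}
    (huv : VertexLT G r u v) (hvw : VertexLT G r v w) : VertexLT G r u w := by
  obtain ⟨A₀, B₀, hA₀, hB₀, -, hu₀, hv₀⟩ := huv.2
  obtain ⟨A₁, B₁, hA₁, hB₁, hr₁, hv₁, hw₁⟩ := hvw.2
  obtain ⟨hM, -, hMA₁, -⟩ := hmt A₀ A₁ hA₀ hA₁
  refine ⟨?_, mt A₀ A₁, B₁, hM, hB₁, htrans _ _ _ hM hA₁ hB₁ hMA₁ hr₁,
    huv.mem_meet htrans hjn hmt hi hii hj hm hA₀ hA₁ hu₀ hv₁, hw₁⟩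
  by_contra huw
  obtain ⟨E, hE, huwE⟩ := MaxCliq.exists_superset_s13 (G.isClique_pair.2 fun hne =>
    not_not.1 fun hadj => huw ((G.compl_adj u w).2 ⟨hne, hadj⟩))
  have huE : u ∈ E := huwE (Set.mem_insert u {w})
  obtain ⟨hX, -, hXE, -⟩ := hmt A₁ E hA₁ hE
  obtain ⟨hY, -, hEY, -⟩ := hjn B₀ E hB₀ hE
  have hvE : v ∈ E := hi _ E _ hX hE hY hXE hEY
    ⟨hvw.mem_meet htrans hjn hmt hi hii hj hm hA₁ hE hv₁ (huwE (Set.mem_insert_of_mem u rfl)),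
      huv.mem_join htrans hjn hmt hi hii hj hm hE hB₀ huE hv₀⟩
  exact ((G.compl_adj u v).1 huv.1).2 (hE.1 huE hvE huv.1.ne)

theorem vertexLT_or_vertexLT [Finite V] (htrans : MaxCliqTrans G r) (hjn : IsMaxCliqJoin G r jn)
    (hmt : IsMaxCliqMeet G r mt) (hii : UnionSubsetJoinUnionMeet G jn mt) {u v : V}
    (huv : Gᶜ.Adj u v) : VertexLT G r u v ∨ VertexLT G r v u := by
  obtain ⟨A, hA, huA⟩ := MaxCliq.exists_superset_s13 (G.isClique_singleton u)
  obtain ⟨B, hB, hvB⟩ := MaxCliq.exists_superset_s13 (G.isClique_singleton v)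
  obtain ⟨hJ, hAJ, -, -⟩ := hjn A B hA hB
  obtain ⟨hM, hMA, -, -⟩ := hmt A B hA hB
  have hMJ : r (mt A B) (jn A B) := htrans _ _ _ hM hA hJ hMA hAJ
  have hnadj := ((G.compl_adj u v).1 huv).2
  rcases hii A B hA hB (Or.inl (huA rfl)), hii A B hA hB (Or.inr (hvB rfl)) with
    ⟨hu | hu, hv | hv⟩
  · exact absurd (hJ.1 hu hv huv.ne) hnadj
  · exact .inr ⟨huv.symm, _, _, hM, hJ, hMJ, hv, hu⟩
  · exact .inl ⟨huv, _, _, hM, hJ, hMJ, hu, hv⟩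
  · exact absurd (hM.1 hu hv huv.ne) hnadj

theorem isPartialOrder_vertexLE [Finite V] (htrans : MaxCliqTrans G r) (hjn : IsMaxCliqJoin G r jn)
    (hmt : IsMaxCliqMeet G r mt) (hi : MaxCliqConvex G r) (hii : UnionSubsetJoinUnionMeet G jn mt)
    (hj : InterSubset G jn) (hm : InterSubset G mt) :
    IsPartialOrder V fun u v => u = v ∨ VertexLT G r u v :=
  haveI : IsStrictOrder V (VertexLT G r) :=
    { irrefl := fun _ h => h.1.ne rfl
      trans := fun _ _ _ => VertexLT.trans htrans hjn hmt hi hii hj hm }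
  inferInstanceAs (IsPartialOrder V (partialOrderOfSO (VertexLT G r)).le)

theorem adj_iff_not_vertexLE [Finite V] (htrans : MaxCliqTrans G r) (hjn : IsMaxCliqJoin G r jn)
    (hmt : IsMaxCliqMeet G r mt) (hii : UnionSubsetJoinUnionMeet G jn mt) {u v : V} (hne : u ≠ v) :
    G.Adj u v ↔ ¬(u = v ∨ VertexLT G r u v) ∧ ¬(v = u ∨ VertexLT G r v u) := by
  refine ⟨fun hadj => ⟨?_, ?_⟩, fun ⟨huv, hvu⟩ => ?_⟩
  · rintro (rfl | h)
    exacts [hne rfl, ((G.compl_adj u v).1 h.1).2 hadj]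
  · rintro (rfl | h)
    exacts [hne rfl, ((G.compl_adj v u).1 h.1).2 hadj.symm]
  · by_contra hnadj
    exact (vertexLT_or_vertexLT htrans hjn hmt hii ((G.compl_adj u v).2 ⟨hne, hnadj⟩)).elim
      (huv <| .inr ·) (hvu <| .inr ·)

theorem rel_iff_forall_exists_vertexLE (htrans : MaxCliqTrans G r) (hjn : IsMaxCliqJoin G r jn)
    (hmt : IsMaxCliqMeet G r mt) (hi : MaxCliqConvex G r) (hii : UnionSubsetJoinUnionMeet G jn mt)
    (hj : InterSubset G jn) (hm : InterSubset G mt) {A B : Set V}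
    (hA : MaxCliq G A) (hB : MaxCliq G B) :
    r A B ↔ ∀ a ∈ A, ∃ b ∈ B, a = b ∨ VertexLT G r a b := by
  refine ⟨fun hr a ha => ?_, fun h => ?_⟩
  · by_cases haB : a ∈ B
    · exact ⟨a, haB, .inl rfl⟩
    obtain ⟨b, hb, hab⟩ := hB.exists_compl_adj haB
    exact ⟨b, hb, .inr ⟨hab, A, B, hA, hB, hr, ha, hb⟩⟩
  · obtain ⟨hM, -, hMB, -⟩ := hmt A B hA hB
    have hAM : A ⊆ mt A B := fun a ha => by
      obtain ⟨b, hb, rfl | hab⟩ := h a ha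
      · exact hm A B hA hB ⟨ha, hb⟩
      · exact hab.mem_meet htrans hjn hmt hi hii hj hm hA hB ha hb
    rwa [hA.2 _ hM.1 hAM]

end Reverse

theorem stmt13_general {V : Type*} [Fintype V] (G : SimpleGraph V)
    (r : Set V → Set V → Prop) (jn mt : Set V → Set V → Set V)
    (htrans : ∀ A B C, MaxCliq G A → MaxCliq G B → MaxCliq G C → r A B → r B C → r A C)
    (hjn : ∀ A B, MaxCliq G A → MaxCliq G B →
      MaxCliq G (jn A B) ∧ r A (jn A B) ∧ r B (jn A B) ∧
      (∀ C, MaxCliq G C → r A C → r B C → r (jn A B) C))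
    (hmt : ∀ A B, MaxCliq G A → MaxCliq G B →
      MaxCliq G (mt A B) ∧ r (mt A B) A ∧ r (mt A B) B ∧
      (∀ C, MaxCliq G C → r C A → r C B → r C (mt A B)))
    (hi : ∀ A B C, MaxCliq G A → MaxCliq G B → MaxCliq G C → r A B → r B C → A ∩ C ⊆ B)
    (hii : ∀ A B, MaxCliq G A → MaxCliq G B → A ∪ B ⊆ jn A B ∪ mt A B) :
    (∃ le : V → V → Prop, IsPartialOrder V le ∧
      (∀ u v : V, u ≠ v → (G.Adj u v ↔ ¬ le u v ∧ ¬ le v u)) ∧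
      (∀ A B, MaxCliq G A → MaxCliq G B → (r A B ↔ ∀ a ∈ A, ∃ b ∈ B, le a b))) ↔
    (∀ A B, MaxCliq G A → MaxCliq G B → A ∩ B ⊆ jn A B ∧ A ∩ B ⊆ mt A B) := by
  constructor
  · rintro ⟨le, hle, hadj, hr⟩ A B hA hB
    let _ : PartialOrder V :=
      { le := le, le_refl := refl_of le, le_trans := fun _ _ _ => trans_of le,
        le_antisymm := fun _ _ => antisymm_of le }
    exact ⟨interSubset_of_isMaxCliqJoin hadj hjn hr A B hA hB,
      interSubset_of_isMaxCliqMeet hadj hmt hr A B hA hB⟩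
  · intro hiii
    have hj : InterSubset G jn := fun A B hA hB => (hiii A B hA hB).1
    have hm : InterSubset G mt := fun A B hA hB => (hiii A B hA hB).2
    exact ⟨_, isPartialOrder_vertexLE htrans hjn hmt hi hii hj hm,
      fun _ _ => adj_iff_not_vertexLE htrans hjn hmt hii,
      fun _ _ => rel_iff_forall_exists_vertexLE htrans hjn hmt hi hii hj hm⟩

/-- For a lattice structure on the maximal cliques of a cocomparability graph `G`
satisfying conditions (i) and (ii): it arises as the maximal antichain lattice of
some transitive orientation of the complement of `G` iff condition (iii) holds. -/
theorem stmt13 {V : Type*} [Fintype V] (G : SimpleGraph V)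
    (hG : IsCocomparabilityGraph G)
    (r : Set V → Set V → Prop) (jn mt : Set V → Set V → Set V)
    (hrefl : ∀ A, MaxCliq G A → r A A)
    (hantisymm : ∀ A B, MaxCliq G A → MaxCliq G B → r A B → r B A → A = B)
    (htrans : ∀ A B C, MaxCliq G A → MaxCliq G B → MaxCliq G C → r A B → r B C → r A C)
    (hjn : ∀ A B, MaxCliq G A → MaxCliq G B →
      MaxCliq G (jn A B) ∧ r A (jn A B) ∧ r B (jn A B) ∧
      (∀ C, MaxCliq G C → r A C → r B C → r (jn A B) C))
    (hmt : ∀ A B, MaxCliq G A → MaxCliq G B →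
      MaxCliq G (mt A B) ∧ r (mt A B) A ∧ r (mt A B) B ∧
      (∀ C, MaxCliq G C → r C A → r C B → r C (mt A B)))
    (hi : ∀ A B C, MaxCliq G A → MaxCliq G B → MaxCliq G C → r A B → r B C → A ∩ C ⊆ B)
    (hii : ∀ A B, MaxCliq G A → MaxCliq G B → A ∪ B ⊆ jn A B ∪ mt A B) :
    (∃ le : V → V → Prop, IsPartialOrder V le ∧
      (∀ u v : V, u ≠ v → (G.Adj u v ↔ ¬ le u v ∧ ¬ le v u)) ∧
      (∀ A B, MaxCliq G A → MaxCliq G B → (r A B ↔ ∀ a ∈ A, ∃ b ∈ B, le a b))) ↔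
    (∀ A B, MaxCliq G A → MaxCliq G B → A ∩ B ⊆ jn A B ∧ A ∩ B ⊆ mt A B) :=
  stmt13_general G r jn mt htrans hjn hmt hi hii
end

section
/- Let P be a finite partial order and let u, v be incomparable elements of P (u ∥_P v). Suppose C_u and C_v are maximal antichains of P with u ∈ C_u, v ∉ C_u, v ∈ C_v, u ∉ C_v, and C_u ⊑ C_v with C_u ≠ C_v. Then there exists a maximal antichain C of P with u ∈ C, v ∈ C, C_u ⊑ C ⊑ C_v, C ≠ C_u, and C ≠ C_v. -/
/-- Every element is comparable to some element of a maximal antichain. -/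
lemma maxAC_comp {α : Type*} [PartialOrder α] {A : Set α} (hA : MaxAntichain A) (x : α) :
    ∃ c ∈ A, x ≤ c ∨ c ≤ x := by
  by_cases hx : x ∈ A
  · exact ⟨x, hx, Or.inl le_rfl⟩
  by_contra h
  push_neg at h
  have hins : IsAntichain (· ≤ ·) (insert x A) := by
    intro a ha b hb hab hle
    rcases ha with rfl | ha
    · rcases hb with rfl | hb
      · exact hab rfl
      · exact (h b hb).1 hle
    · rcases hb with rfl | hb
      · exact (h a ha).2 hle
      · exact hA.1 ha hb hab hle
  have heq := hA.2 _ hins (Set.subset_insert x A)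
  have : x ∈ A := by rw [heq]; exact Set.mem_insert x A
  exact hx this

/-- An antichain meeting every "chain through each point" is a maximal antichain. -/
lemma maxAC_of_comp {α : Type*} [PartialOrder α] {A : Set α}
    (h1 : IsAntichain (· ≤ ·) A) (h2 : ∀ x, ∃ c ∈ A, x ≤ c ∨ c ≤ x) :
    MaxAntichain A := by
  refine ⟨h1, fun B hB hAB => ?_⟩
  refine Set.Subset.antisymm hAB fun z hz => ?_
  obtain ⟨c, hcA, hc⟩ := h2 z
  by_cases hzc : z = c
  · exact hzc ▸ hcA
  rcases hc with h | h
  · exact absurd h (hB hz (hAB hcA) hzc)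
  · exact absurd h (hB (hAB hcA) hz (Ne.symm hzc))

/-- For incomparable `u, v` and maximal antichains `C_u ⊑ C_v` with `u ∈ C_u \ C_v`
and `v ∈ C_v \ C_u`, there is a maximal antichain strictly between them containing
both `u` and `v`. -/
theorem stmt17 {α : Type*} [Fintype α] [PartialOrder α] (u v : α)
    (huv : ¬ u ≤ v ∧ ¬ v ≤ u)
    (Cu Cv : Set α) (hCu : MaxAntichain Cu) (hCv : MaxAntichain Cv)
    (huCu : u ∈ Cu) (hvCu : v ∉ Cu) (hvCv : v ∈ Cv) (huCv : u ∉ Cv)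
    (hle : MARel Cu Cv) (hne : Cu ≠ Cv) :
    ∃ C : Set α, MaxAntichain C ∧ u ∈ C ∧ v ∈ C ∧
      MARel Cu C ∧ MARel C Cv ∧ C ≠ Cu ∧ C ≠ Cv := by
  classical
  -- F2': any element of Cv below an element of Cu equals it.
  have F2 : ∀ b ∈ Cv, ∀ a ∈ Cu, b ≤ a → b = a := by
    intro b hb a ha hba
    obtain ⟨b', hb', hab'⟩ := hle a ha
    have hbb' : b ≤ b' := le_trans hba hab'
    have : b = b' := by
      by_contra hne'
      exact hCv.1 hb hb' hne' hbb'
    subst this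
    exact le_antisymm hba hab'
  -- F1: no element of Cu is above v.
  have F1 : ∀ a ∈ Cu, ¬ v ≤ a := by
    intro a ha hva
    have := F2 v hvCv a ha hva
    exact hvCu (this ▸ ha)
  -- The down-set D.
  set D : Set α :=
    {x | (∃ b ∈ Cv, x ≤ b) ∧ ¬ ∃ a ∈ Cu, (¬ a ≤ v ∧ ¬ v ≤ a) ∧ a < x} with hD
  -- C : maximal elements of D.
  set C : Set α := {m | m ∈ D ∧ ∀ y ∈ D, m ≤ y → m = y} with hC
  have hCsubD : C ⊆ D := fun m hm => hm.1
  -- every element of D lies below a maximal element of D.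
  have hup : ∀ x ∈ D, ∃ m ∈ C, x ≤ m := by
    intro x hx
    obtain ⟨m, hxm, hm⟩ := (Set.toFinite D).exists_le_maximal hx
    exact ⟨m, ⟨hm.1, fun y hy hmy => le_antisymm hmy (hm.2 hy hmy)⟩, hxm⟩
  -- v ∈ C
  have hvD : v ∈ D := by
    refine ⟨⟨v, hvCv, le_rfl⟩, ?_⟩
    rintro ⟨a, ha, ⟨hav, _⟩, halt⟩
    exact hav halt.le
  have hvC : v ∈ C := by
    refine ⟨hvD, fun y hy hvy => ?_⟩
    obtain ⟨b, hb, hyb⟩ := hy.1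
    have hvb : v ≤ b := le_trans hvy hyb
    have : v = b := by
      by_contra hne'
      exact hCv.1 hvCv hb hne' hvb
    subst this
    exact le_antisymm hvy hyb
  -- elements of Cu incomparable to v are in C.
  have hA1C : ∀ a ∈ Cu, ¬ a ≤ v → ¬ v ≤ a → a ∈ C := by
    intro a ha hav hva
    have haD : a ∈ D := by
      refine ⟨hle a ha, ?_⟩
      rintro ⟨a', ha', _, halt⟩
      exact hCu.1 ha' ha (fun h => absurd (h ▸ halt) (lt_irrefl a)) halt.le
    refine ⟨haD, fun y hy hay => ?_⟩
    by_contra hne'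
    exact hy.2 ⟨a, ha, ⟨hav, hva⟩, lt_of_le_of_ne hay hne'⟩
  have huC : u ∈ C := hA1C u huCu huv.1 huv.2
  -- C is an antichain.
  have hCanti : IsAntichain (· ≤ ·) C := by
    intro a ha b hb hab hle'
    exact hab (ha.2 b hb.1 hle')
  -- C is a maximal antichain.
  have hCmax : MaxAntichain C := by
    refine maxAC_of_comp hCanti fun z => ?_
    by_cases hzD : z ∈ D
    · obtain ⟨m, hm, hzm⟩ := hup z hzD
      exact ⟨m, hm, Or.inl hzm⟩
    by_cases hzU : ∃ a ∈ Cu, (¬ a ≤ v ∧ ¬ v ≤ a) ∧ a < z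
    · obtain ⟨a, ha, ⟨hav, hva⟩, halt⟩ := hzU
      exact ⟨a, hA1C a ha hav hva, Or.inr halt.le⟩
    -- z ∉ ↓Cv and z ∉ U
    have hzCv : ¬ ∃ b ∈ Cv, z ≤ b := fun h => hzD ⟨h, hzU⟩
    obtain ⟨b, hb, hcomp⟩ := maxAC_comp hCv z
    have hbz : b ≤ z := by
      rcases hcomp with h | h
      · exact absurd ⟨b, hb, h⟩ hzCv
      · exact h
    have hbD : b ∈ D := by
      refine ⟨⟨b, hb, le_rfl⟩, ?_⟩
      rintro ⟨a, ha, hinc, halt⟩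
      exact hzU ⟨a, ha, hinc, lt_of_lt_of_le halt hbz⟩
    have hbC : b ∈ C := by
      refine ⟨hbD, fun y hy hby => ?_⟩
      obtain ⟨b', hb', hyb'⟩ := hy.1
      have hbb' : b ≤ b' := le_trans hby hyb'
      have : b = b' := by
        by_contra hne'
        exact hCv.1 hb hb' hne' hbb'
      subst this
      exact le_antisymm hby hyb'
    exact ⟨b, hbC, Or.inr hbz⟩
  -- Cu ⊑ C
  have h1 : MARel Cu C := by
    intro a ha
    by_cases hav : ¬ a ≤ v ∧ ¬ v ≤ a
    · exact ⟨a, hA1C a ha hav.1 hav.2, le_rfl⟩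
    · push_neg at hav
      by_cases h' : a ≤ v
      · exact ⟨v, hvC, h'⟩
      · exact absurd (hav h') (F1 a ha)
  -- C ⊑ Cv
  have h2 : MARel C Cv := fun m hm => hm.1.1
  refine ⟨C, hCmax, huC, hvC, h1, h2, ?_, ?_⟩
  · intro h; exact hvCu (h ▸ hvC)
  · intro h; exact huCv (h ▸ huC)
end
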